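/- Let W : (0,∞) → ℝ be measurable with s ↦ |W(s)| s² locally integrable on [0,∞), and set g_W(t) := t^{−2} ∫₀^t W(s) s² ds for t > 0. Then for every smooth compactly supported φ : ℝ³ → ℂ² such that x ↦ W(|x|)|φ(x)|² is integrable, one has ∫_{ℝ³} W(|x|)|φ(x)|² dx = −2 Re ∫_{ℝ³} g_W(|x|) ⟨((x/|x|)·∇φ)(x), φ(x)⟩ dx, where a·∇φ := Σ_{j=1}^{3} aⱼ ∂φ/∂xⱼ and ⟨·,·⟩ is the Hermitian inner product on ℂ². -/

import Mathlib

open MeasureTheory Real Set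
open scoped ENNReal NNReal

noncomputable section

abbrev R3 : Type := EuclideanSpace ℝ (Fin 3)
abbrev C2 : Type := EuclideanSpace ℂ (Fin 2)

/-- The Pauli matrices σ₁, σ₂, σ₃. -/
def pauli : Fin 3 → Matrix (Fin 2) (Fin 2) ℂ :=
  ![!![0, 1; 1, 0], !![0, -Complex.I; Complex.I, 0], !![1, 0; 0, -1]]

/-- Action of a 2×2 complex matrix on ℂ². -/
def matVec (A : Matrix (Fin 2) (Fin 2) ℂ) (v : C2) : C2 :=
  (EuclideanSpace.equiv (Fin 2) ℂ).symm (A.mulVec (EuclideanSpace.equiv (Fin 2) ℂ v))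

/-- The partial derivative ∂φ/∂xⱼ. -/
def pderiv (φ : R3 → C2) (j : Fin 3) (x : R3) : C2 :=
  fderiv ℝ φ x (EuclideanSpace.single j (1 : ℝ))

/-- (σ·∇φ)(x) = Σⱼ σⱼ ∂φ/∂xⱼ(x). -/
def sigmaGrad (φ : R3 → C2) (x : R3) : C2 :=
  ∑ j : Fin 3, matVec (pauli j) (pderiv φ j x)

/-- The cross product x × ∇φ(x), componentwise. -/
def crossGrad (φ : R3 → C2) (x : R3) : Fin 3 → C2 :=
  ![(x 1 : ℂ) • pderiv φ 2 x - (x 2 : ℂ) • pderiv φ 1 x,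
    (x 2 : ℂ) • pderiv φ 0 x - (x 0 : ℂ) • pderiv φ 2 x,
    (x 0 : ℂ) • pderiv φ 1 x - (x 1 : ℂ) • pderiv φ 0 x]

/-- (σ·Lφ)(x) = −i Σⱼ σⱼ (x × ∇φ(x))ⱼ, where L = −i x × ∇. -/
def sigmaL (φ : R3 → C2) (x : R3) : C2 :=
  (-Complex.I) • ∑ j : Fin 3, matVec (pauli j) (crossGrad φ x j)

/-- A₊[V₁,V₂] := sup_{r>0} (1/r²) ∫₀^r (V₁(t)+V₂(t)) t² dt, in [0,∞]. -/
def Aplus (V₁ V₂ : ℝ → ℝ) : ℝ≥0∞ :=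
  ⨆ r ∈ Set.Ioi (0 : ℝ), ENNReal.ofReal (1 / r ^ 2) *
    ∫⁻ t in Set.Ioo 0 r, ENNReal.ofReal ((V₁ t + V₂ t) * t ^ 2)

/-- A₋[V₁,V₂] := sup_{r>0} r² ∫_r^∞ (V₁(t)+V₂(t)) t⁻² dt, in [0,∞]. -/
def Aminus (V₁ V₂ : ℝ → ℝ) : ℝ≥0∞ :=
  ⨆ r ∈ Set.Ioi (0 : ℝ), ENNReal.ofReal (r ^ 2) *
    ∫⁻ t in Set.Ioi r, ENNReal.ofReal ((V₁ t + V₂ t) / t ^ 2)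

/-- The directional derivative a·∇φ := Σⱼ aⱼ ∂φ/∂xⱼ. -/
def dirDeriv (a : R3) (φ : R3 → C2) (x : R3) : C2 :=
  ∑ j : Fin 3, (a j : ℂ) • pderiv φ j x

/-!
In polar coordinates `x = r • ω` the identity splits into one-dimensional identities along the
rays. For fixed `ω`, put `u r = ‖φ (r • ω)‖ ^ 2` and `P r = ∫₀ʳ W s * s ^ 2 = r ^ 2 * g_W r`; then
`∫₀^∞ W r * r ^ 2 * u r = -∫₀^∞ P r * u' r` by parts, and `u' r = 2 Re ⟪φ, ω · ∇φ⟫ (r • ω)`.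
As `P` is merely absolutely continuous, the integration by parts is the one for absolutely
continuous functions. Nothing depends on the dimension: in dimension `d`, `s ^ 2` becomes
`s ^ (d - 1)`.
-/

open scoped InnerProductSpace

theorem integral_Ioi_mul_eq_neg_integral_Ioi_primitive_mul_deriv {k u : ℝ → ℝ}
    (hk : LocallyIntegrableOn k (Ici 0)) (hu : ContDiff ℝ 1 u) (hsupp : HasCompactSupport u) :
    ∫ r in Ioi 0, k r * u r = -∫ t in Ioi 0, (∫ s in Ioo 0 t, k s) * deriv u t := by
  obtain ⟨M₁, hM₁pos, hM₁⟩ := hsupp.exists_pos_le_norm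
  obtain ⟨M₂, -, hM₂⟩ := hsupp.deriv.exists_pos_le_norm
  set M := max M₁ M₂
  have hM : 0 ≤ M := hM₁pos.le.trans (le_max_left _ _)
  have hvanish : ∀ t, M ≤ t → u t = 0 ∧ deriv u t = 0 := fun t ht =>
    ⟨hM₁ t (by rw [Real.norm_eq_abs]; linarith [le_abs_self t, le_max_left M₁ M₂]),
     hM₂ t (by rw [Real.norm_eq_abs]; linarith [le_abs_self t, le_max_right M₁ M₂])⟩
  have hIoi : ∀ f : ℝ → ℝ, (∀ t, M ≤ t → f t = 0) → ∫ t in Ioi 0, f t = ∫ t in 0..M, f t :=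
    fun f hf => by
      rw [intervalIntegral.integral_of_le hM, setIntegral_eq_of_subset_of_forall_sdiff_eq_zero
        measurableSet_Ioi Ioc_subset_Ioi_self fun t ht =>
          hf t (not_le.1 fun h => ht.2 ⟨ht.1, h⟩).le]
  have hkM : IntervalIntegrable k volume 0 M :=
    (hk.integrableOn_compact_subset (by simp [uIcc_of_le hM, Icc_subset_Ici_self])
      isCompact_uIcc).intervalIntegrable
  set P : ℝ → ℝ := fun t => ∫ s in 0..t, k s
  have hparts := AbsolutelyContinuousOnInterval.integral_mul_deriv_eq_deriv_mul
    (hkM.absolutelyContinuousOnInterval_intervalIntegral (c := 0) (by simp))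
    (hu.contDiffOn.absolutelyContinuousOnInterval (a := 0) (b := M))
  simp only [(hvanish M le_rfl).1, intervalIntegral.integral_same, mul_zero, zero_mul,
    sub_zero, zero_sub] at hparts
  rw [hIoi _ fun t ht => by simp [(hvanish t ht).1], hIoi _ fun t ht => by simp [(hvanish t ht).2]]
  calc ∫ r in 0..M, k r * u r = ∫ r in 0..M, deriv P r * u r := by
        refine intervalIntegral.integral_congr_ae ?_
        filter_upwards [hkM.ae_hasDerivAt_integral] with t ht htM
        rw [(ht (uIoc_subset_uIcc htM) 0 (by simp)).deriv]
    _ = -∫ t in 0..M, P t * deriv u t := by rw [hparts, neg_neg]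
    _ = -∫ t in 0..M, (∫ s in Ioo 0 t, k s) * deriv u t := by
        congr 1
        refine intervalIntegral.integral_congr fun t ht => ?_
        rw [uIcc_of_le hM] at ht
        simp only [P, intervalIntegral.integral_of_le ht.1, integral_Ioc_eq_integral_Ioo]

theorem continuous_integral_Ioo_zero {k : ℝ → ℝ} (hk : LocallyIntegrableOn k (Ici 0)) :
    Continuous fun t => ∫ s in Ioo 0 t, k s := by
  have hint : ∀ a b, IntervalIntegrable ((Ioi 0).indicator k) volume a b := fun a b => by
    rw [intervalIntegrable_iff, IntegrableOn, integrable_indicator_iff measurableSet_Ioi,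
      IntegrableOn, Measure.restrict_restrict measurableSet_Ioi]
    exact hk.integrableOn_compact_subset inter_subset_right
      (isCompact_uIcc.inter_right isClosed_Ici)
      |>.mono_set fun s hs => ⟨uIoc_subset_uIcc hs.2, mem_Ici.2 (le_of_lt hs.1)⟩
  refine (intervalIntegral.continuous_primitive hint 0).congr fun t => ?_
  rcases le_or_gt 0 t with ht | ht
  · rw [intervalIntegral.integral_of_le ht, ← integral_Ioc_eq_integral_Ioo,
      setIntegral_indicator measurableSet_Ioi, Ioc_inter_Ioi, max_self]
  · rw [intervalIntegral.integral_of_ge ht.le, setIntegral_indicator measurableSet_Ioi,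
      Ioo_eq_empty (not_lt.2 ht.le)]
    simp

section Polar

open Module

variable {E : Type*} [NormedAddCommGroup E] [NormedSpace ℝ E] [FiniteDimensional ℝ E]
  [Nontrivial E] [MeasurableSpace E] [BorelSpace E] (μ : Measure E) [μ.IsAddHaarMeasure]
  {G : Type*} [NormedAddCommGroup G]

theorem integral_volumeIoiPow [NormedSpace ℝ G] (n : ℕ) (h : ℝ → G) :
    ∫ r, h r ∂Measure.volumeIoiPow n = ∫ r in Ioi 0, r ^ n • h r := by
  simp only [Measure.volumeIoiPow, ENNReal.ofReal]
  rw [integral_withDensity_eq_integral_smul (measurable_subtype_coe.pow_const _).real_toNNReal,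
    integral_subtype_comap measurableSet_Ioi fun r => (r ^ n).toNNReal • h r]
  refine setIntegral_congr_fun measurableSet_Ioi fun r (hr : 0 < r) => ?_
  rw [NNReal.smul_def, Real.coe_toNNReal _ (by positivity)]

theorem integral_eq_integral_toSphere_integral_Ioi [NormedSpace ℝ G] {f : E → G}
    (hf : Integrable f μ) :
    ∫ x, f x ∂μ =
      ∫ ω, (∫ r in Ioi (0 : ℝ), r ^ (finrank ℝ E - 1) • f (r • (ω : E))) ∂μ.toSphere := by
  have hpolar := (μ.measurePreserving_homeomorphUnitSphereProd).symm
    (homeomorphUnitSphereProd E).toMeasurableEquiv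
  have hsub : ∫ x, f x ∂μ = ∫ x : ({0}ᶜ : Set E), f x ∂μ.comap (↑) := by
    rw [integral_subtype_comap (measurableSet_singleton _).compl, restrict_compl_singleton]
  have hint : Integrable (f ∘ (↑)) (μ.comap ((↑) : ({0}ᶜ : Set E) → E)) :=
    (integrableOn_iff_comap_subtypeVal (measurableSet_singleton _).compl).1 hf.integrableOn
  have hprod := (hpolar.integrable_comp_emb (MeasurableEquiv.measurableEmbedding _)).2 hint
  rw [hsub, ← hpolar.integral_comp']
  simp only [Function.comp_def, Homeomorph.toMeasurableEquiv_symm_coe,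
    homeomorphUnitSphereProd_symm_apply_coe] at hprod ⊢
  rw [integral_prod _ hprod]
  exact integral_congr_ae (ae_of_all _ fun ω => integral_volumeIoiPow _ fun r => f (r • (ω : E)))

theorem integrable_of_norm_le_radial {f : E → G} {h : ℝ → ℝ} {R : ℝ}
    (hf : AEStronglyMeasurable f μ) (hzero : ∀ x, R ≤ ‖x‖ → f x = 0)
    (hle : ∀ x, ‖x‖ < R → ‖f x‖ ≤ h ‖x‖)
    (hh : IntegrableOn (fun r => r ^ (finrank ℝ E - 1) * h r) (Ioo 0 R)) :
    Integrable f μ := by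
  have hball : IntegrableOn (fun x => h ‖x‖) (Metric.ball 0 R) μ :=
    (integrableOn_fun_norm_addHaar μ).2 hh
  refine (integrableOn_iff_integrable_of_support_subset fun x hx => ?_).1
    (hball.mono' hf.restrict (ae_restrict_of_forall_mem measurableSet_ball fun x hx => ?_))
  · exact mem_ball_zero_iff.2 (not_le.1 fun h => hx (hzero x h))
  · exact hle x (mem_ball_zero_iff.1 hx)

theorem integrable_weight_mul_norm_sq {W : ℝ → ℝ} (hWm : Measurable W)
    (hloc : LocallyIntegrableOn (fun s => |W s| * s ^ (finrank ℝ E - 1)) (Ici 0))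
    {φ : E → G} (hφ : Continuous φ) (hsupp : HasCompactSupport φ) :
    Integrable (fun x => W ‖x‖ * ‖φ x‖ ^ 2) μ := by
  obtain ⟨R, -, hR⟩ := hsupp.exists_pos_le_norm
  obtain ⟨C, hC⟩ := hφ.bounded_above_of_compact_support hsupp
  refine integrable_of_norm_le_radial μ (h := fun r => |W r| * C ^ 2) (R := R)
    ((hWm.comp measurable_norm).mul (hφ.norm.pow 2).measurable).aestronglyMeasurable
    (fun x hx => by simp [hR x hx]) (fun x _ => ?_) ?_
  · rw [norm_mul, norm_pow, norm_norm, Real.norm_eq_abs]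
    gcongr
    exact hC x
  · have hWR := (hloc.integrableOn_compact_subset Icc_subset_Ici_self
      (isCompact_Icc (a := 0) (b := R))).mono_set Ioo_subset_Icc_self
    exact IntegrableOn.congr_fun (hWR.mul_const (C ^ 2)) (fun r _ => by ring) measurableSet_Ioo

end Polar

section Weight

variable {E : Type*} [NormedAddCommGroup E] [NormedSpace ℝ E]
  {F : Type*} [NormedAddCommGroup F] [InnerProductSpace ℂ F]

/-- `g_W` of the paper, for the radial density `s ^ n` of dimension `n + 1`. -/
def weightAverage (W : ℝ → ℝ) (n : ℕ) (t : ℝ) : ℝ :=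
  (t ^ n)⁻¹ * ∫ s in Ioo 0 t, W s * s ^ n

theorem hasDerivAt_norm_sq_comp_smul {φ : E → F} (hφ : Differentiable ℝ φ) (ω : E) (r : ℝ) :
    HasDerivAt (fun r : ℝ => ‖φ (r • ω)‖ ^ 2)
      (2 * (⟪φ (r • ω), fderiv ℝ φ (r • ω) ω⟫_ℂ).re) r := by
  let := InnerProductSpace.rclikeToReal ℂ F
  have hray : HasDerivAt (fun r : ℝ => r • ω) ω r := by
    simpa using (hasDerivAt_id r).smul_const ω
  exact ((hφ _).hasFDerivAt.comp_hasDerivAt r hray).norm_sq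

theorem integral_Ioi_weight_mul_norm_sq_comp_smul {W : ℝ → ℝ} {n : ℕ}
    (hk : LocallyIntegrableOn (fun s => W s * s ^ n) (Ici 0)) {φ : E → F} (hφ : ContDiff ℝ 1 φ)
    (hsupp : HasCompactSupport φ) {ω : E} (hω : ‖ω‖ = 1) :
    ∫ r in Ioi (0 : ℝ), r ^ n • (W ‖r • ω‖ * ‖φ (r • ω)‖ ^ 2) =
      -2 * ∫ r in Ioi (0 : ℝ), r ^ n • ((weightAverage W n ‖r • ω‖ : ℂ) *
        ⟪φ (r • ω), fderiv ℝ φ (r • ω) (‖r • ω‖⁻¹ • r • ω)⟫_ℂ).re := by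
  have hnorm : ∀ r : ℝ, 0 < r → ‖r • ω‖ = r := fun r hr => by
    rw [norm_smul, hω, mul_one, Real.norm_of_nonneg hr.le]
  have hu : ContDiff ℝ 1 fun r : ℝ => ‖φ (r • ω)‖ ^ 2 :=
    (contDiff_norm_sq ℂ).comp (hφ.comp (contDiff_id.smul contDiff_const))
  have hω₀ : ω ≠ 0 := norm_ne_zero_iff.1 (by simp [hω])
  have husupp : HasCompactSupport fun r : ℝ => ‖φ (r • ω)‖ ^ 2 :=
    (hsupp.comp_isClosedEmbedding (isClosedEmbedding_smul_left hω₀)).comp_left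
      (g := fun v => ‖v‖ ^ 2) (by simp)
  calc ∫ r in Ioi 0, r ^ n • (W ‖r • ω‖ * ‖φ (r • ω)‖ ^ 2)
      = ∫ r in Ioi 0, W r * r ^ n * ‖φ (r • ω)‖ ^ 2 :=
        setIntegral_congr_fun measurableSet_Ioi fun r hr => by
          rw [hnorm r hr, smul_eq_mul]; ring
    _ = -∫ t in Ioi 0, (∫ s in Ioo 0 t, W s * s ^ n) * deriv (fun r : ℝ => ‖φ (r • ω)‖ ^ 2) t :=
        integral_Ioi_mul_eq_neg_integral_Ioi_primitive_mul_deriv hk hu husupp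
    _ = _ := by
        rw [← integral_const_mul, ← integral_neg]
        refine setIntegral_congr_fun measurableSet_Ioi fun t (ht : 0 < t) => ?_
        rw [(hasDerivAt_norm_sq_comp_smul (hφ.differentiable one_ne_zero) ω t).deriv, hnorm t ht,
          inv_smul_smul₀ ht.ne', weightAverage, Complex.re_ofReal_mul, smul_eq_mul]
        field_simp

end Weight

section HaarMeasure

open Module

variable {E : Type*} [NormedAddCommGroup E] [NormedSpace ℝ E] [FiniteDimensional ℝ E]
  [Nontrivial E] [MeasurableSpace E] [BorelSpace E] (μ : Measure E) [μ.IsAddHaarMeasure]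
  {F : Type*} [NormedAddCommGroup F] [InnerProductSpace ℂ F]

theorem integrable_weightAverage_mul_inner {W : ℝ → ℝ}
    (hk : LocallyIntegrableOn (fun s => W s * s ^ (finrank ℝ E - 1)) (Ici 0))
    {φ : E → F} (hφ : ContDiff ℝ 1 φ) (hsupp : HasCompactSupport φ) :
    Integrable (fun x => (weightAverage W (finrank ℝ E - 1) ‖x‖ : ℂ) *
      ⟪φ x, fderiv ℝ φ x (‖x‖⁻¹ • x)⟫_ℂ) μ := by
  have hP := continuous_integral_Ioo_zero hk
  obtain ⟨R, -, hR⟩ := hsupp.exists_pos_le_norm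
  obtain ⟨C₀, hC₀⟩ := hφ.continuous.bounded_above_of_compact_support hsupp
  obtain ⟨C₁, hC₁⟩ := (hφ.continuous_fderiv one_ne_zero).bounded_above_of_compact_support
    (hsupp.fderiv (𝕜 := ℝ))
  have hmeas : AEStronglyMeasurable (fun x => (weightAverage W (finrank ℝ E - 1) ‖x‖ : ℂ) *
      ⟪φ x, fderiv ℝ φ x (‖x‖⁻¹ • x)⟫_ℂ) μ := by
    have hg : Measurable (weightAverage W (finrank ℝ E - 1)) :=
      ((measurable_id.pow_const _).inv).mul hP.measurable
    have hv : Measurable fun x : E => ‖x‖⁻¹ • x := by fun_prop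
    have hD : AEStronglyMeasurable (fun x => fderiv ℝ φ x (‖x‖⁻¹ • x)) μ :=
      isBoundedBilinearMap_apply.continuous.comp_aestronglyMeasurable
        ((hφ.continuous_fderiv one_ne_zero).aestronglyMeasurable.prodMk hv.aestronglyMeasurable)
    exact (Complex.measurable_ofReal.comp (hg.comp measurable_norm)).aestronglyMeasurable.mul
      (continuous_inner.comp_aestronglyMeasurable (hφ.continuous.aestronglyMeasurable.prodMk hD))
  refine integrable_of_norm_le_radial μ (R := R)
    (h := fun r => |weightAverage W (finrank ℝ E - 1) r| * (C₀ * C₁)) hmeas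
    (fun x hx => by simp [hR x hx]) (fun x _ => ?_) ?_
  · have hunit : ‖‖x‖⁻¹ • x‖ ≤ 1 := by
      rcases eq_or_ne x 0 with rfl | hx
      · simp
      · rw [norm_smul, norm_inv, norm_norm, inv_mul_cancel₀ (norm_ne_zero_iff.2 hx)]
    rw [norm_mul, Complex.norm_real, Real.norm_eq_abs]
    gcongr
    calc ‖⟪φ x, fderiv ℝ φ x (‖x‖⁻¹ • x)⟫_ℂ‖
        ≤ ‖φ x‖ * (‖fderiv ℝ φ x‖ * ‖‖x‖⁻¹ • x‖) :=
          (norm_inner_le_norm _ _).trans (by gcongr; exact (fderiv ℝ φ x).le_opNorm _)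
      _ ≤ C₀ * (C₁ * 1) := mul_le_mul (hC₀ x) (mul_le_mul (hC₁ x) hunit (norm_nonneg _)
            ((norm_nonneg _).trans (hC₁ x))) (by positivity) ((norm_nonneg _).trans (hC₀ 0))
      _ = C₀ * C₁ := by ring
  · refine ((hP.abs.mul_const (C₀ * C₁)).integrableOn_Icc.mono_set
      Ioo_subset_Icc_self).congr_fun (fun r (hr : r ∈ Ioo 0 R) => ?_) measurableSet_Ioo
    rw [weightAverage, abs_mul, abs_inv, abs_pow, abs_of_pos hr.1]
    field_simp [hr.1.ne']

theorem integral_weight_mul_norm_sq_eq_neg_two_mul_re_integral {W : ℝ → ℝ} (hWm : Measurable W)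
    (hloc : LocallyIntegrableOn (fun s => |W s| * s ^ (finrank ℝ E - 1)) (Ici 0))
    {φ : E → F} (hφ : ContDiff ℝ 1 φ) (hsupp : HasCompactSupport φ) :
    ∫ x, W ‖x‖ * ‖φ x‖ ^ 2 ∂μ =
      -2 * (∫ x, (weightAverage W (finrank ℝ E - 1) ‖x‖ : ℂ) *
        ⟪φ x, fderiv ℝ φ x (‖x‖⁻¹ • x)⟫_ℂ ∂μ).re := by
  have hk : LocallyIntegrableOn (fun s => W s * s ^ (finrank ℝ E - 1)) (Ici 0) :=
    hloc.mono (by fun_prop) (ae_of_all _ fun s => by simp)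
  have hG := integrable_weightAverage_mul_inner μ hk hφ hsupp
  have hF := integrable_weight_mul_norm_sq μ hWm hloc hφ.continuous hsupp
  rw [← RCLike.re_to_complex, ← integral_re hG, integral_eq_integral_toSphere_integral_Ioi μ hF,
    integral_eq_integral_toSphere_integral_Ioi μ hG.re, ← integral_const_mul]
  exact integral_congr_ae (ae_of_all _ fun ω =>
    integral_Ioi_weight_mul_norm_sq_comp_smul hk hφ hsupp (norm_eq_of_mem_sphere ω))

end HaarMeasure

theorem dirDeriv_eq_fderiv (a : R3) (φ : R3 → C2) (x : R3) :
    dirDeriv a φ x = fderiv ℝ φ x a := by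
  conv_rhs => rw [← (EuclideanSpace.basisFun (Fin 3) ℝ).sum_repr a]
  simp [dirDeriv, pderiv, Complex.coe_smul]

-- The paper's `⟨u, v⟩ = Σᵢ uᵢ conj vᵢ` is `inner ℂ v u` in Mathlib's convention.
theorem integral_weight_eq_re_integral_general
    (W : ℝ → ℝ) (hWm : Measurable W)
    (hloc : LocallyIntegrableOn (fun s : ℝ => |W s| * s ^ 2) (Set.Ici (0 : ℝ)))
    (g : ℝ → ℝ)
    (hg : ∀ t : ℝ, 0 < t → g t = (1 / t ^ 2) * ∫ s in Set.Ioo (0 : ℝ) t, W s * s ^ 2)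
    (φ : R3 → C2) (hφ : ContDiff ℝ (⊤ : ℕ∞) φ) (hsupp : HasCompactSupport φ) :
    ∫ x : R3, W ‖x‖ * ‖φ x‖ ^ 2 =
      -2 * (∫ x : R3, ((g ‖x‖ : ℝ) : ℂ) *
        (inner ℂ (φ x) (dirDeriv (‖x‖⁻¹ • x) φ x) : ℂ)).re := by
  have hdim : Module.finrank ℝ R3 - 1 = 2 := by simp
  have hRHS : ∀ᵐ x : R3, ((g ‖x‖ : ℝ) : ℂ) * inner ℂ (φ x) (dirDeriv (‖x‖⁻¹ • x) φ x) =
      (weightAverage W 2 ‖x‖ : ℂ) * ⟪φ x, fderiv ℝ φ x (‖x‖⁻¹ • x)⟫_ℂ := by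
    filter_upwards [Measure.ae_ne volume 0] with x hx
    rw [hg _ (norm_pos_iff.2 hx), one_div, dirDeriv_eq_fderiv, weightAverage]
  rw [integral_congr_ae hRHS]
  have := integral_weight_mul_norm_sq_eq_neg_two_mul_re_integral (volume : Measure R3) hWm
    (hdim ▸ hloc) (hφ.of_le (by norm_num)) hsupp
  rwa [hdim] at this

/-- ∫ W(|x|)|φ|² = −2 Re ∫ g_W(|x|) ⟨(x/|x|)·∇φ, φ⟩, where
⟨u,v⟩ = Σᵢ uᵢ conj(vᵢ) (so ⟨u,v⟩ is `inner v u` in Mathlib's convention). -/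
theorem integral_weight_eq_re_integral
    (W : ℝ → ℝ) (hWm : Measurable W)
    (hloc : LocallyIntegrableOn (fun s : ℝ => |W s| * s ^ 2) (Set.Ici (0 : ℝ)))
    (g : ℝ → ℝ)
    (hg : ∀ t : ℝ, 0 < t → g t = (1 / t ^ 2) * ∫ s in Set.Ioo (0 : ℝ) t, W s * s ^ 2)
    (φ : R3 → C2) (hφ : ContDiff ℝ (⊤ : ℕ∞) φ) (hsupp : HasCompactSupport φ)
    (hint : Integrable fun x : R3 => W ‖x‖ * ‖φ x‖ ^ 2) :
    ∫ x : R3, W ‖x‖ * ‖φ x‖ ^ 2 =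
      -2 * (∫ x : R3, ((g ‖x‖ : ℝ) : ℂ) *
        (inner ℂ (φ x) (dirDeriv (‖x‖⁻¹ • x) φ x) : ℂ)).re :=
  integral_weight_eq_re_integral_general W hWm hloc g hg φ hφ hsupp
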